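/- Let G be an (m,n)-mixed graph, let c be a simple colouring of G (a simple homomorphism from G to some (m,n)-mixed graph H), and let N ⊆ V(G) be a set of vertices on which c is constant with value i (a vertex of H). Then c(x) = i for every x ∈ conv(N). -/

import Mathlib

/-- An `(m,n)`-mixed graph on vertex type `V`: arcs (ordered pairs of distinct
vertices) coloured by `Fin m` and edges (unordered pairs of distinct vertices)
coloured by `Fin n`, with at most one adjacency between any two vertices.
`arcColor u v = some j` means there is an arc from `u` to `v` of colour `j`;
`edgeColor u v = some i` means there is an edge between `u` and `v` of colour `i`. -/
structure MixedGraph (m n : ℕ) (V : Type) where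
  arcColor : V → V → Option (Fin m)
  edgeColor : V → V → Option (Fin n)
  edge_symm : ∀ u v, edgeColor u v = edgeColor v u
  edge_irrefl : ∀ v, edgeColor v v = none
  arc_asymm : ∀ u v, (arcColor u v).isSome → arcColor v u = none
  arc_not_edge : ∀ u v, (arcColor u v).isSome → edgeColor u v = none

namespace MixedGraph

variable {m n : ℕ} {V W : Type}

/-- Adjacency in the underlying graph `U(G)`. -/
def Adj (G : MixedGraph m n V) (u v : V) : Prop :=
  (G.arcColor u v).isSome ∨ (G.arcColor v u).isSome ∨ (G.edgeColor u v).isSome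

/-- The underlying simple graph `U(G)`. -/
def underlying (G : MixedGraph m n V) : SimpleGraph V where
  Adj := G.Adj
  symm := by
    refine ⟨fun u v h => ?_⟩
    rcases h with h | h | h
    · exact Or.inr (Or.inl h)
    · exact Or.inl h
    · refine Or.inr (Or.inr ?_)
      rw [G.edge_symm]
      exact h
  loopless := by
    refine ⟨fun v h => ?_⟩
    rcases h with h | h | h
    · simp [G.arc_asymm v v h] at h
    · simp [G.arc_asymm v v h] at h
    · simp [G.edge_irrefl v] at h

/-- `G` is complete when its underlying graph is a complete graph. -/
def IsComplete (G : MixedGraph m n V) : Prop :=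
  ∀ u v : V, u ≠ v → G.Adj u v

/-- A simple homomorphism of `(m,n)`-mixed graphs: either `G` has one vertex or
`φ` is non-constant, and every arc/edge is mapped to an arc/edge of the same
colour unless its endpoints are identified. -/
def IsSimpleHom [Fintype V] (G : MixedGraph m n V) (H : MixedGraph m n W) (φ : V → W) : Prop :=
  (Fintype.card V = 1 ∨ ∃ x y : V, φ x ≠ φ y) ∧
  (∀ u v : V, ∀ j : Fin m, G.arcColor u v = some j →
      φ u = φ v ∨ H.arcColor (φ u) (φ v) = some j) ∧
  (∀ u v : V, ∀ i : Fin n, G.edgeColor u v = some i →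
      φ u = φ v ∨ H.edgeColor (φ u) (φ v) = some i)

/-- The simple chromatic number `χₛ(G)`: the least `t` such that `G` admits a
simple homomorphism to some `(m,n)`-mixed graph on `t` vertices. -/
noncomputable def simpleChrom [Fintype V] (G : MixedGraph m n V) : ℕ :=
  sInf {t : ℕ | ∃ H : MixedGraph m n (Fin t), ∃ φ : V → Fin t, G.IsSimpleHom H φ}

/-- An (ordinary) homomorphism of `(m,n)`-mixed graphs. -/
def IsHom (G : MixedGraph m n V) (H : MixedGraph m n W) (φ : V → W) : Prop :=
  (∀ u v : V, G.Adj u v → φ u ≠ φ v) ∧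
  (∀ u v : V, ∀ j : Fin m, G.arcColor u v = some j → H.arcColor (φ u) (φ v) = some j) ∧
  (∀ u v : V, ∀ i : Fin n, G.edgeColor u v = some i → H.edgeColor (φ u) (φ v) = some i)

/-- The chromatic number `χ(G)`: the least `t` such that `G` admits a
homomorphism to some `(m,n)`-mixed graph on `t` vertices. -/
noncomputable def chrom (G : MixedGraph m n V) : ℕ :=
  sInf {t : ℕ | ∃ H : MixedGraph m n (Fin t), ∃ φ : V → Fin t, G.IsHom H φ}

/-- `v` is between `u` and `w`: both `u` and `w` are adjacent to `v`, and `u`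
and `w` do not agree on `v` (the two adjacencies do not have the same type). -/
def Between (G : MixedGraph m n V) (v u w : V) : Prop :=
  G.Adj u v ∧ G.Adj w v ∧
  ¬ ((∃ i : Fin n, G.edgeColor u v = some i ∧ G.edgeColor w v = some i) ∨
     (∃ j : Fin m, G.arcColor u v = some j ∧ G.arcColor w v = some j) ∨
     (∃ j : Fin m, G.arcColor v u = some j ∧ G.arcColor v w = some j))

/-- A set of vertices is convex if no vertex outside it is between two of its
vertices. -/
def IsConvex (G : MixedGraph m n V) (C : Set V) : Prop :=
  ∀ u ∈ C, ∀ w ∈ C, ∀ v : V, G.Between v u w → v ∈ C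

/-- `conv(N)`: the smallest convex set containing `N`. -/
def conv (G : MixedGraph m n V) (N : Set V) : Set V :=
  ⋂₀ {C : Set V | G.IsConvex C ∧ N ⊆ C}

end MixedGraph

/-- If `c` is a simple colouring of `G` (a simple homomorphism
to some `(m,n)`-mixed graph `H`) and `N ⊆ V(G)` satisfies `c(u) = i` for all
`u ∈ N`, then `c(x) = i` for every `x ∈ conv(N)`. -/
theorem stmt2 {m n : ℕ} {V W : Type} [Fintype V] (G : MixedGraph m n V)
    (H : MixedGraph m n W) (c : V → W) (hc : G.IsSimpleHom H c)
    (N : Set V) (i : W) (hN : ∀ u ∈ N, c u = i) :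
    ∀ x ∈ G.conv N, c x = i := by
  obtain ⟨-, harc, hedge⟩ := hc
  -- key: the image in H of the adjacency between p (with c p = i) and v
  have key : ∀ p v : V, c p = i → c v ≠ i → G.Adj p v →
      (∃ i' : Fin n, G.edgeColor p v = some i' ∧ H.edgeColor i (c v) = some i') ∨
      (∃ j : Fin m, G.arcColor p v = some j ∧ H.arcColor i (c v) = some j) ∨
      (∃ j : Fin m, G.arcColor v p = some j ∧ H.arcColor (c v) i = some j) := by
    intro p v hp hv hadj
    rcases hadj with h | h | h
    · obtain ⟨j, hj⟩ := Option.isSome_iff_exists.mp h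
      rcases harc p v j hj with heq | hH
      · exact absurd (hp ▸ heq.symm) hv
      · exact Or.inr (Or.inl ⟨j, hj, hp ▸ hH⟩)
    · obtain ⟨j, hj⟩ := Option.isSome_iff_exists.mp h
      rcases harc v p j hj with heq | hH
      · exact absurd (hp ▸ heq) hv
      · exact Or.inr (Or.inr ⟨j, hj, hp ▸ hH⟩)
    · obtain ⟨i', hi'⟩ := Option.isSome_iff_exists.mp h
      rcases hedge p v i' hi' with heq | hH
      · exact absurd (hp ▸ heq.symm) hv
      · exact Or.inl ⟨i', hi', hp ▸ hH⟩
  have hconv : G.IsConvex {x | c x = i} := by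
    intro u hu w hw v hbet
    by_contra hv
    obtain ⟨hadju, hadjw, hnot⟩ := hbet
    apply hnot
    have hsE : H.edgeColor i (c v) = H.edgeColor (c u) (c v) := by rw [hu]
    rcases key u v hu hv hadju with ⟨i1, g1, h1⟩ | ⟨j1, g1, h1⟩ | ⟨j1, g1, h1⟩ <;>
      rcases key w v hw hv hadjw with ⟨i2, g2, h2⟩ | ⟨j2, g2, h2⟩ | ⟨j2, g2, h2⟩
    · exact Or.inl ⟨i1, g1, by rw [g2, Option.some_inj.mp (h1.symm.trans h2)]⟩
    · exact absurd (H.arc_not_edge i (c v) (h2 ▸ rfl)) (by rw [h1]; simp)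
    · exact absurd (H.arc_not_edge (c v) i (h2 ▸ rfl)) (by
        rw [H.edge_symm (c v) i, h1]; simp)
    · exact absurd (H.arc_not_edge i (c v) (h1 ▸ rfl)) (by rw [h2]; simp)
    · exact Or.inr (Or.inl ⟨j1, g1, by rw [g2, Option.some_inj.mp (h1.symm.trans h2)]⟩)
    · exact absurd (H.arc_asymm i (c v) (h1 ▸ rfl)) (by rw [h2]; simp)
    · exact absurd (H.arc_not_edge (c v) i (h1 ▸ rfl)) (by
        rw [H.edge_symm] at h2; rw [h2]; simp)
    · exact absurd (H.arc_asymm i (c v) (h2 ▸ rfl)) (by rw [h1]; simp)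
    · exact Or.inr (Or.inr ⟨j1, g1, by rw [g2, Option.some_inj.mp (h1.symm.trans h2)]⟩)
  intro x hx
  exact hx {x | c x = i} ⟨hconv, hN⟩
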